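/- If a ∈ [0,1], a ≠ 1/2, then A = (3 − 2a − √(4 + (2a−1)²))/(2(1−2a)) belongs to [0,1], and (0, A, 1−A) together with e₁ = (1,0,0) are exactly the fixed points of V_28 on S². -/
import Mathlib


def V28 (a : ℝ) (p : ℝ × ℝ × ℝ) : ℝ × ℝ × ℝ :=
  (p.1^2 + 2*p.1*(1-p.1), p.2.2^2 + 2*a*p.2.1*p.2.2, p.2.1^2 + 2*(1-a)*p.2.1*p.2.2)

def S2 : Set (ℝ × ℝ × ℝ) :=
  {p | 0 ≤ p.1 ∧ 0 ≤ p.2.1 ∧ 0 ≤ p.2.2 ∧ p.1 + p.2.1 + p.2.2 = 1}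

theorem V28_fixed_points (a : ℝ) (ha : a ∈ Set.Icc (0:ℝ) 1) (ha' : a ≠ 1/2) :
    (3 - 2*a - Real.sqrt (4 + (2*a-1)^2)) / (2*(1-2*a)) ∈ Set.Icc (0:ℝ) 1 ∧
    {p ∈ S2 | V28 a p = p} =
      {((1:ℝ),(0:ℝ),(0:ℝ)),
       ((0:ℝ), (3 - 2*a - Real.sqrt (4 + (2*a-1)^2)) / (2*(1-2*a)),
        1 - (3 - 2*a - Real.sqrt (4 + (2*a-1)^2)) / (2*(1-2*a)))} := by
  obtain ⟨ha0, ha1⟩ := ha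
  set s := Real.sqrt (4 + (2*a-1)^2) with hs_def
  have hs2 : s^2 = 4 + (2*a-1)^2 := Real.sq_sqrt (by positivity)
  have hs0 : 0 ≤ s := Real.sqrt_nonneg _
  have hs_ge2 : 2 ≤ s := by nlinarith [sq_nonneg (2*a-1)]
  have h2a : 1 - 2*a ≠ 0 := fun h => ha' (by linarith)
  have hD : 2*(1-2*a) ≠ 0 := by
    simpa using h2a
  set A := (3 - 2*a - s) / (2*(1-2*a)) with hA_def
  have hkey : (3-2*a-s)^2 + 2*(2*a-3)*(3-2*a-s) + 4*(1-2*a) = 0 := by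
    linear_combination hs2
  have hND : A * (2*(1-2*a)) = 3 - 2*a - s := by
    rw [hA_def]; field_simp
  have hAq : (1-2*a) * A^2 + (2*a-3)*A + 1 = 0 := by
    have h := hkey
    rw [← hND] at h
    have h4 : (4*(1-2*a)) * ((1-2*a) * A^2 + (2*a-3)*A + 1) = 0 := by
      linear_combination h
    rcases mul_eq_zero.mp h4 with h' | h'
    · exact absurd h' (by intro hc; exact h2a (by linarith))
    · exact h'
  have hA0 : 0 ≤ A := by
    rcases ha'.lt_or_gt with hlt | hgt
    · apply div_nonneg _ (by linarith)
      nlinarith [hs2, hs0]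
    · rw [div_nonneg_iff]
      right
      constructor
      · nlinarith [hs2, hs0]
      · linarith
  have hA1 : A ≤ 1 := by
    rcases ha'.lt_or_gt with hlt | hgt
    · rw [div_le_one (by linarith)]
      nlinarith [hs2, hs0]
    · rw [div_le_one_iff]
      right; right
      constructor
      · linarith
      · nlinarith [hs2, hs0]
  refine ⟨⟨hA0, hA1⟩, ?_⟩
  ext ⟨x, y, z⟩
  simp only [S2, V28, Set.mem_setOf_eq, Set.mem_sep_iff, Set.mem_insert_iff,
    Set.mem_singleton_iff, Prod.mk.injEq]
  constructor
  · rintro ⟨⟨hx, hy, hz, hsum⟩, h1, h2, h3⟩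
    have hx01 : x * (1 - x) = 0 := by linear_combination h1
    rcases mul_eq_zero.mp hx01 with h | h
    · -- x = 0
      right
      have hx0 : x = 0 := h
      subst hx0
      have hz1 : z = 1 - y := by linarith
      subst hz1
      have hq : (1-2*a)*y^2 + (2*a-3)*y + 1 = 0 := by linear_combination h2
      have hy1 : y ≤ 1 := by linarith
      have h1A : (1-2*a)*A = (3-2*a-s)/2 := by
        rw [hA_def]; field_simp
      have hM : (1-2*a)*(y+A) + (2*a-3) < 0 := by
        nlinarith [mul_nonneg ha0 hy, h1A]
      have hfac : (y - A) * ((1-2*a)*(y+A) + (2*a-3)) = 0 := by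
        linear_combination hq - hAq
      have hyA : y = A := by
        rcases mul_eq_zero.mp hfac with h' | h'
        · linarith
        · exact absurd h' hM.ne
      exact ⟨rfl, hyA, by rw [hyA]⟩
    · -- x = 1
      left
      have hx1 : x = 1 := by linarith
      refine ⟨hx1, by linarith, by linarith⟩
  · rintro (⟨hx, hy, hz⟩ | ⟨hx, hy, hz⟩) <;> subst hx <;> subst hy <;> subst hz
    · refine ⟨⟨by norm_num, by norm_num, by norm_num, by norm_num⟩, by norm_num⟩
    · refine ⟨⟨le_refl 0, hA0, by linarith, by ring⟩, ?_, ?_, ?_⟩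
      · norm_num
      · linear_combination hAq
      · linear_combination -hAq
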